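/- arXiv:1401.0611 — 3 statements merged into one kernel-verified Lean document; each statement's English description precedes it below -/
import Mathlib

section
/- Let X be a Coxeter graph satisfying condition (★) and let w ∈ W_c(X). Then Σ_{x ∈ W_c(X), x ≤ w} (−1)^{ℓ(x)} q^{-ℓ(x)/2} L_{x,w}(q^{-1/2}) equals 1 if w = e (the identity) and 0 otherwise. -/
/-!
Common setup: Coxeter systems, Bruhat order, fully commutative elements,
the Hecke algebra `H(X)`, the generalized Temperley--Lieb algebra `TL(X)`,
and the polynomial families `R`, `P` (Kazhdan--Lusztig), `D`, `a`, `L`.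
-/

open LaurentPolynomial Polynomial

noncomputable section

namespace TLPaper

open scoped Classical

/-- The ring `A = ℤ[q^{1/2}, q^{-1/2}]`, modelled as Laurent polynomials over `ℤ`
in the variable `T = q^{1/2}`. -/
abbrev A : Type := LaurentPolynomial ℤ

/-- The element `q = (q^{1/2})^2` of `A`. -/
def q : A := LaurentPolynomial.T 2

variable {B : Type*} {W : Type*} [Group W] {M : CoxeterMatrix B} (cs : CoxeterSystem M W)

/-- The Bruhat order on a Coxeter group: the reflexive-transitive closure of the relation
`x → xt` where `t` is a reflection and the length increases. -/
def bruhatLE : W → W → Prop :=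
  Relation.ReflTransGen
    (fun x y => (∃ t : W, cs.IsReflection t ∧ y = x * t) ∧ cs.length x < cs.length y)

/-- Strict Bruhat order. -/
def bruhatLT (x w : W) : Prop := bruhatLE cs x w ∧ x ≠ w

/-- A single commutation move on words: interchanging two adjacent commuting letters
(i.e. letters `i`, `j` with `M i j = 2`). -/
def CommMove (M : CoxeterMatrix B) (l₁ l₂ : List B) : Prop :=
  ∃ (a b : List B) (i j : B), M i j = 2 ∧ l₁ = a ++ i :: j :: b ∧ l₂ = a ++ j :: i :: b

/-- An element `w` is *fully commutative* if any reduced word for `w` can be obtained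
from any other by a sequence of commutation moves. -/
def FullyCommutative (w : W) : Prop :=
  ∀ l₁ l₂ : List B, (cs.IsReduced l₁ ∧ cs.wordProd l₁ = w) →
    (cs.IsReduced l₂ ∧ cs.wordProd l₂ = w) →
    Relation.ReflTransGen (CommMove M) l₁ l₂

/-- All the data of the paper: the Hecke algebra `H` of the Coxeter system `cs` with its
standard basis `Tw`, the `R`-polynomials, the Kazhdan--Lusztig polynomials `P`,
the generalized Temperley--Lieb algebra `TL = H/J` (with `proj` the canonical projection),
the `D`-polynomials, the `a`-polynomials, and the IC basis `c` with its `L`-polynomials.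
The polynomial `L x w` is a polynomial in the variable `v = q^{-1/2}`;
all other polynomial families are polynomials in `q`. -/
structure TLContext {B : Type*} {W : Type*} [Group W] {M : CoxeterMatrix B}
    (cs : CoxeterSystem M W)
    (H : Type*) [Ring H] [Algebra A H] (TL : Type*) [Ring TL] [Algebra A TL] where
  /-- The standard basis `{T_w}` of the Hecke algebra. -/
  Tw : W → H
  Tw_indep : LinearIndependent A Tw
  Tw_span : Submodule.span A (Set.range Tw) = ⊤
  Tw_one : Tw 1 = 1
  /-- Multiplication rule, case `ℓ(ws) > ℓ(w)`. -/
  Tw_mul_simple_of_lt : ∀ (w : W) (i : B),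
    cs.length w < cs.length (w * cs.simple i) →
    Tw w * Tw (cs.simple i) = Tw (w * cs.simple i)
  /-- Multiplication rule, case `ℓ(ws) < ℓ(w)`. -/
  Tw_mul_simple_of_gt : ∀ (w : W) (i : B),
    cs.length (w * cs.simple i) < cs.length w →
    Tw w * Tw (cs.simple i) = q • Tw (w * cs.simple i) + (q - 1) • Tw w
  /-- `Tinv w` is the inverse of `T_w` in `H`. -/
  Tinv : W → H
  Tw_mul_Tinv : ∀ w : W, Tw w * Tinv w = 1
  Tinv_mul_Tw : ∀ w : W, Tinv w * Tw w = 1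
  /-- Bruhat lower sets are finite. -/
  finite_bruhatLE : ∀ w : W, {x | bruhatLE cs x w}.Finite
  /-- The `R`-polynomials. -/
  R : W → W → Polynomial ℤ
  R_self : ∀ w : W, R w w = 1
  R_eq_zero : ∀ x w : W, ¬ bruhatLE cs x w → R x w = 0
  /-- `T_{w⁻¹}⁻¹ = ε_w q^{-ℓ(w)} Σ_{x ≤ w} ε_x R_{x,w}(q) T_x`. -/
  Tinv_eq : ∀ w : W, Tinv w⁻¹ =
    ((-1 : A) ^ cs.length w * LaurentPolynomial.T (-2 * (cs.length w : ℤ))) •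
      ∑ᶠ x ∈ {x | bruhatLE cs x w},
        ((-1 : A) ^ cs.length x * Polynomial.aeval q (R x w)) • Tw x
  /-- The Kazhdan--Lusztig polynomials. -/
  P : W → W → Polynomial ℤ
  P_self : ∀ w : W, P w w = 1
  P_eq_zero : ∀ x w : W, ¬ bruhatLE cs x w → P x w = 0
  /-- `deg P_{x,w} ≤ (ℓ(w) - ℓ(x) - 1)/2` for `x < w`. -/
  P_degree : ∀ x w : W, bruhatLT cs x w →
    2 * (P x w).natDegree + 1 ≤ cs.length w - cs.length x
  /-- The involution `ι` of the Hecke algebra. -/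
  iotaH : H →+* H
  iotaH_involutive : ∀ h : H, iotaH (iotaH h) = h
  iotaH_Tw : ∀ w : W, iotaH (Tw w) = Tinv w⁻¹
  iotaH_smul : ∀ (a : A) (h : H),
    iotaH (a • h) = (LaurentPolynomial.invert (R := ℤ) a) • iotaH h
  /-- `ι` fixes the Kazhdan--Lusztig basis element
  `C'_w = q^{-ℓ(w)/2} Σ_{x ≤ w} P_{x,w}(q) T_x`. -/
  iotaH_KL : ∀ w : W,
    iotaH ((LaurentPolynomial.T (-(cs.length w : ℤ)) : A) •
      ∑ᶠ x ∈ {x | bruhatLE cs x w}, (Polynomial.aeval q (P x w)) • Tw x) =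
    (LaurentPolynomial.T (-(cs.length w : ℤ)) : A) •
      ∑ᶠ x ∈ {x | bruhatLE cs x w}, (Polynomial.aeval q (P x w)) • Tw x
  /-- The canonical projection `σ : H → TL = H/J`. -/
  proj : H →ₐ[A] TL
  proj_surjective : Function.Surjective proj
  /-- The kernel of `σ` is the two-sided ideal `J` generated by the elements
  `Σ_{w ∈ ⟨s_i, s_j⟩} T_w`, over all pairs of non-commuting generators `s_i, s_j`
  such that `s_i s_j` has finite order. -/
  proj_ker : ∀ h : H, proj h = 0 ↔ h ∈ Submodule.span A
    {x : H | ∃ (i j : B) (a b : H), M i j ≠ 0 ∧ M i j ≠ 1 ∧ M i j ≠ 2 ∧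
      x = a * (∑ᶠ u ∈ (Subgroup.closure {cs.simple i, cs.simple j} : Set W), Tw u) * b}
  /-- The images `t_w = σ(T_w)`, `w` fully commutative, are linearly independent. -/
  t_indep : LinearIndependent A
    (fun x : {w : W // FullyCommutative cs w} => proj (Tw x.1))
  /-- The `D`-polynomials. -/
  D : W → W → Polynomial ℤ
  /-- `t_w = Σ_{x ∈ W_c, x ≤ w} D_{x,w}(q) t_x`. -/
  D_eq : ∀ w : W, proj (Tw w) =
    ∑ᶠ x ∈ {x | FullyCommutative cs x ∧ bruhatLE cs x w},
      (Polynomial.aeval q (D x w)) • proj (Tw x)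
  D_self : ∀ w : W, FullyCommutative cs w → D w w = 1
  D_eq_zero : ∀ x w : W, ¬ (FullyCommutative cs x ∧ bruhatLE cs x w) → D x w = 0
  /-- The `a`-polynomials. -/
  apol : W → W → Polynomial ℤ
  /-- `(t_{w⁻¹})⁻¹ = q^{-ℓ(w)} Σ_{y ∈ W_c, y ≤ w} a_{y,w}(q) t_y` for `w ∈ W_c`. -/
  apol_eq : ∀ w : W, FullyCommutative cs w →
    proj (Tinv w⁻¹) = (LaurentPolynomial.T (-2 * (cs.length w : ℤ)) : A) •
      ∑ᶠ y ∈ {y | FullyCommutative cs y ∧ bruhatLE cs y w},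
        (Polynomial.aeval q (apol y w)) • proj (Tw y)
  apol_self : ∀ w : W, FullyCommutative cs w → apol w w = 1
  apol_eq_zero : ∀ y w : W,
    ¬ (FullyCommutative cs y ∧ FullyCommutative cs w ∧ bruhatLE cs y w) → apol y w = 0
  /-- The involution `ι` of the Temperley--Lieb algebra. -/
  iotaTL : TL →+* TL
  iotaTL_involutive : ∀ x : TL, iotaTL (iotaTL x) = x
  iotaTL_t : ∀ w : W, iotaTL (proj (Tw w)) = proj (Tinv w⁻¹)
  iotaTL_smul : ∀ (a : A) (x : TL),
    iotaTL (a • x) = (LaurentPolynomial.invert (R := ℤ) a) • iotaTL x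
  /-- The `L`-polynomials: `L x w` is a polynomial in the variable `v = q^{-1/2}`, and
  `L_{x,w}(q^{-1/2})` is obtained by evaluating it at `T (-1) = q^{-1/2}`. -/
  L : W → W → Polynomial ℤ
  /-- The IC basis `{c_w}` of `TL`. -/
  c : W → TL
  /-- `c_w = Σ_{x ∈ W_c, x ≤ w} q^{-ℓ(x)/2} L_{x,w}(q^{-1/2}) t_x`. -/
  c_eq : ∀ w : W, FullyCommutative cs w →
    c w = ∑ᶠ x ∈ {x | FullyCommutative cs x ∧ bruhatLE cs x w},
      ((LaurentPolynomial.T (-(cs.length x : ℤ)) : A) *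
        Polynomial.aeval (R := ℤ) ((LaurentPolynomial.T (-1) : A)) (L x w)) • proj (Tw x)
  /-- Convention: `c_x = 0` for `x ∉ W_c`. -/
  c_eq_zero : ∀ w : W, ¬ FullyCommutative cs w → c w = 0
  /-- The IC basis is `ι`-invariant. -/
  c_invariant : ∀ w : W, FullyCommutative cs w → iotaTL (c w) = c w
  L_self : ∀ w : W, L w w = 1
  L_eq_zero : ∀ x w : W,
    ¬ (FullyCommutative cs x ∧ FullyCommutative cs w ∧ bruhatLE cs x w) → L x w = 0
  /-- `L_{x,w}(q^{-1/2}) ∈ q^{-1/2} ℤ[q^{-1/2}]` for `x < w`. -/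
  L_coeff_zero : ∀ x w : W, bruhatLT cs x w → (L x w).coeff 0 = 0

namespace TLContext

variable {B : Type*} {W : Type*} [Group W] {M : CoxeterMatrix B} {cs : CoxeterSystem M W}
  {H : Type*} [Ring H] [Algebra A H] {TL : Type*} [Ring TL] [Algebra A TL]
  (Ctx : TLContext cs H TL)

/-- `μ(x,w)`: the coefficient of `q^{(ℓ(w)-ℓ(x)-1)/2}` in the Kazhdan--Lusztig
polynomial `P_{x,w}(q)` (which is zero unless `ℓ(w) - ℓ(x)` is odd). -/
def mu (x w : W) : ℤ :=
  if Odd (cs.length w - cs.length x) then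
    (Ctx.P x w).coeff ((cs.length w - cs.length x - 1) / 2)
  else 0

/-- The Kazhdan--Lusztig basis element `C'_w = q^{-ℓ(w)/2} Σ_{x ≤ w} P_{x,w}(q) T_x`. -/
def KL (w : W) : H :=
  (LaurentPolynomial.T (-(cs.length w : ℤ)) : A) •
    ∑ᶠ x ∈ {x | bruhatLE cs x w}, (Polynomial.aeval q (Ctx.P x w)) • Ctx.Tw x

/-- Condition (★): the projection sends the Kazhdan--Lusztig basis element `C'_w`
to `c_w` if `w ∈ W_c` and to `0` otherwise. -/
def Star : Prop :=
  (∀ w : W, FullyCommutative cs w → Ctx.proj (Ctx.KL w) = Ctx.c w) ∧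
  (∀ w : W, ¬ FullyCommutative cs w → Ctx.proj (Ctx.KL w) = 0)

/-- `L_{x,w}(q^{-1/2})` as an element of `A`. -/
def Lq (x w : W) : A := Polynomial.aeval (R := ℤ) ((LaurentPolynomial.T (-1) : A)) (Ctx.L x w)

/-- `L_{x,w}(q^{1/2})` as an element of `A`. -/
def Lq' (x w : W) : A := Polynomial.aeval (R := ℤ) ((LaurentPolynomial.T 1 : A)) (Ctx.L x w)

end TLContext

/-!
The sign character `ε : T_w ↦ (-1)^ℓ(w)` of the Hecke algebra is multiplicative and kills each
generator `Σ_{u ∈ ⟨s_i, s_j⟩} T_u` of `J`, since right multiplication by `s_i` pairs its terms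
with opposite signs; so `ε` factors through `TL`. Lifting `c_w` and `ι(c_w) = c_w` to `H`, the
sum `S` of the statement is `ε(c_w)` and also its bar conjugate. On the other hand
`S = P(q^{-1/2})` for the integer polynomial `P(v) = Σ_x (-v)^{ℓ(x)} L_{x,w}(v)`, and `P(0) = 0`
when `w ≠ e`. A polynomial without constant term that is invariant under `v ↦ v⁻¹` vanishes.
-/

theorem _root_.Polynomial.aeval_T_neg_one_eq_invert_toLaurent {R : Type*} [CommSemiring R]
    (p : R[X]) : aeval (T (-1) : R[T;T⁻¹]) p = invert (toLaurent p) := by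
  induction p using Polynomial.induction_on' with
  | add p q hp hq => simp [hp, hq]
  | monomial i a => simp [T_pow, ← C_mul_X_pow_eq_monomial]

theorem _root_.Polynomial.eq_zero_of_toLaurent_eq_invert {R : Type*} [CommSemiring R] {p : R[X]}
    (h0 : p.coeff 0 = 0) (h : toLaurent p = invert (toLaurent p)) : p = 0 := by
  nontriviality R
  have hrev : p * X ^ p.natDegree = p.reverse := by
    apply toLaurent_injective
    rw [toLaurent_reverse, ← h, map_mul, toLaurent_X_pow]
  by_contra hp
  have hdeg : p.natDegree = 0 := by
    have h₁ := congrArg natDegree hrev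
    rw [natDegree_mul_X_pow _ hp] at h₁
    have h₂ := reverse_natDegree_le p
    omega
  exact hp (by rw [eq_C_of_natDegree_eq_zero hdeg, h0, map_zero])

theorem _root_.CoxeterSystem.neg_one_pow_length_mul_simple {B W : Type*} [Group W]
    {M : CoxeterMatrix B} (cs : CoxeterSystem M W) {R : Type*} [Ring R] (u : W) (i : B) :
    (-1 : R) ^ cs.length (u * cs.simple i) = -(-1) ^ cs.length u := by
  rcases cs.length_mul_simple u i with h | h
  · rw [h, pow_succ, mul_neg_one]
  · rw [← h, pow_succ, mul_neg_one, neg_neg]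

section Coxeter

variable {B : Type*} {W : Type*} [Group W] {M : CoxeterMatrix B} {cs : CoxeterSystem M W}

theorem bruhatLE.length_le {x w : W} (h : bruhatLE cs x w) : cs.length x ≤ cs.length w := by
  induction h with
  | refl => rfl
  | tail _ hstep ih => exact ih.trans hstep.2.le

theorem eq_one_of_bruhatLE_one {x : W} (h : bruhatLE cs x 1) : x = 1 :=
  cs.length_eq_zero_iff.mp (Nat.le_zero.mp (cs.length_one ▸ h.length_le))

theorem fullyCommutative_one : FullyCommutative cs (1 : W) := by
  have nil_of_reduced : ∀ l : List B, cs.IsReduced l ∧ cs.wordProd l = 1 → l = [] := by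
    rintro l ⟨hred, hprod⟩
    rw [CoxeterSystem.IsReduced, hprod, cs.length_one] at hred
    exact List.length_eq_zero_iff.mp hred.symm
  intro l₁ l₂ h₁ h₂
  rw [nil_of_reduced l₁ h₁, nil_of_reduced l₂ h₂]

end Coxeter

namespace TLContext

variable {B : Type*} {W : Type*} [Group W] {M : CoxeterMatrix B} {cs : CoxeterSystem M W}
  {H : Type*} [Ring H] [Algebra A H] {TL : Type*} [Ring TL] [Algebra A TL]
  (Ctx : TLContext cs H TL)

theorem finite_fullyCommutative_bruhatLE (Ctx : TLContext cs H TL) (w : W) :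
    {x | FullyCommutative cs x ∧ bruhatLE cs x w}.Finite :=
  (Ctx.finite_bruhatLE w).subset fun _ hx => hx.2

def basisTw : Module.Basis W A H := .mk Ctx.Tw_indep Ctx.Tw_span.ge

@[simp]
theorem basisTw_apply (u : W) : Ctx.basisTw u = Ctx.Tw u := Module.Basis.mk_apply _ _ _

def sign : H →ₗ[A] A := Ctx.basisTw.constr A fun u => (-1) ^ cs.length u

@[simp]
theorem sign_Tw (u : W) : Ctx.sign (Ctx.Tw u) = (-1) ^ cs.length u := by
  rw [← basisTw_apply, sign, Module.Basis.constr_basis]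

theorem sign_mul_Tw_simple (h : H) (i : B) :
    Ctx.sign (h * Ctx.Tw (cs.simple i)) = -Ctx.sign h := by
  suffices Ctx.sign ∘ₗ LinearMap.mulRight A (Ctx.Tw (cs.simple i)) = -Ctx.sign from
    LinearMap.congr_fun this h
  refine Ctx.basisTw.ext fun u => ?_
  simp only [LinearMap.comp_apply, LinearMap.mulRight_apply, LinearMap.neg_apply, basisTw_apply]
  rcases cs.length_mul_simple u i with hlen | hlen
  · rw [Ctx.Tw_mul_simple_of_lt u i (by omega), sign_Tw, sign_Tw,
      cs.neg_one_pow_length_mul_simple]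
  · rw [Ctx.Tw_mul_simple_of_gt u i (by omega), map_add, map_smul, map_smul, sign_Tw, sign_Tw,
      cs.neg_one_pow_length_mul_simple, smul_eq_mul, smul_eq_mul]
    ring

theorem sign_mul_Tw (h : H) (u : W) :
    Ctx.sign (h * Ctx.Tw u) = Ctx.sign h * (-1) ^ cs.length u := by
  induction u using cs.simple_induction_right with
  | one => simp [Ctx.Tw_one]
  | mul_simple_right u i ih =>
    rw [cs.neg_one_pow_length_mul_simple]
    rcases cs.length_mul_simple u i with hlen | hlen
    · rw [← Ctx.Tw_mul_simple_of_lt u i (by omega), ← mul_assoc, sign_mul_Tw_simple, ih, mul_neg]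
    · have hTw : Ctx.Tw u = Ctx.Tw (u * cs.simple i) * Ctx.Tw (cs.simple i) := by
        rw [Ctx.Tw_mul_simple_of_lt _ i (by rw [mul_assoc, cs.simple_mul_simple_self, mul_one]; omega),
          mul_assoc, cs.simple_mul_simple_self, mul_one]
      rw [hTw, ← mul_assoc, sign_mul_Tw_simple] at ih
      rw [mul_neg, ← ih, neg_neg]

theorem sign_mul (g h : H) : Ctx.sign (g * h) = Ctx.sign g * Ctx.sign h := by
  suffices Ctx.sign ∘ₗ LinearMap.mulLeft A g = Ctx.sign g • Ctx.sign from
    LinearMap.congr_fun this h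
  refine Ctx.basisTw.ext fun u => ?_
  simp [sign_mul_Tw]

theorem sign_Tinv (u : W) : Ctx.sign (Ctx.Tinv u) = (-1) ^ cs.length u := by
  have h := congrArg Ctx.sign (Ctx.Tw_mul_Tinv u)
  rw [sign_mul, sign_Tw, ← Ctx.Tw_one, sign_Tw, cs.length_one, pow_zero] at h
  calc Ctx.sign (Ctx.Tinv u)
      = ((-1) ^ cs.length u * (-1) ^ cs.length u) * Ctx.sign (Ctx.Tinv u) := by
        rw [← mul_pow, neg_one_mul, neg_neg, one_pow, one_mul]
    _ = (-1) ^ cs.length u := by rw [mul_assoc, h, mul_one]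

theorem sign_finsum_Tw_eq_zero {S : Set W} (i : B) (hS : ∀ u ∈ S, u * cs.simple i ∈ S) :
    Ctx.sign (∑ᶠ u ∈ S, Ctx.Tw u) = 0 := by
  by_cases hfin : S.Finite
  · rw [finsum_mem_eq_finite_toFinset_sum _ hfin, map_sum]
    refine Finset.sum_involution (fun u _ => u * cs.simple i) (fun u _ => ?_) (fun u _ _ => ?_)
      (fun u hu => ?_) (fun u _ => ?_)
    · rw [sign_Tw, sign_Tw, cs.neg_one_pow_length_mul_simple, add_neg_cancel]
    · exact fun h => cs.length_mul_simple_ne u i (congrArg cs.length h)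
    · rw [Set.Finite.mem_toFinset] at hu ⊢
      exact hS u hu
    · rw [mul_assoc, cs.simple_mul_simple_self, mul_one]
  · -- an infinite `∑ᶠ` is `0` by convention
    rw [finsum_mem_eq_zero_of_infinite, map_zero]
    simpa [Function.support, Ctx.Tw_indep.ne_zero] using hfin

theorem sign_eq_zero_of_proj_eq_zero {h : H} (hh : Ctx.proj h = 0) : Ctx.sign h = 0 := by
  have hJ := (Ctx.proj_ker h).mp hh
  clear hh
  induction hJ using Submodule.span_induction with
  | mem x hx =>
    obtain ⟨i, j, a, b, -, -, -, rfl⟩ := hx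
    have hclosed : ∀ u ∈ ((Subgroup.closure {cs.simple i, cs.simple j} : Subgroup W) : Set W),
        u * cs.simple i ∈ ((Subgroup.closure {cs.simple i, cs.simple j} : Subgroup W) : Set W) :=
      fun u hu => mul_mem hu (Subgroup.subset_closure (by simp))
    rw [sign_mul, sign_mul, Ctx.sign_finsum_Tw_eq_zero i hclosed, mul_zero, zero_mul]
  | zero => exact map_zero _
  | add x y _ _ hx hy => rw [map_add, hx, hy, add_zero]
  | smul a x _ hx => rw [map_smul, hx, smul_zero]

theorem sign_eq_of_proj_eq {h h' : H} (hh : Ctx.proj h = Ctx.proj h') :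
    Ctx.sign h = Ctx.sign h' := by
  rw [← sub_eq_zero, ← map_sub]
  exact Ctx.sign_eq_zero_of_proj_eq_zero (by rw [map_sub, hh, sub_self])

def signedSum (w : W) : A :=
  ∑ᶠ x ∈ {x | FullyCommutative cs x ∧ bruhatLE cs x w},
    (-1 : A) ^ cs.length x * (T (-(cs.length x : ℤ)) : A) * Ctx.Lq x w

def signedLPoly (w : W) : ℤ[X] :=
  ∑ᶠ x ∈ {x | FullyCommutative cs x ∧ bruhatLE cs x w}, (-X) ^ cs.length x * Ctx.L x w

theorem invert_signedSum {w : W} (hw : FullyCommutative cs w) :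
    invert (Ctx.signedSum w) = Ctx.signedSum w := by
  have hfin := Ctx.finite_fullyCommutative_bruhatLE w
  set a : W → A := fun x => T (-(cs.length x : ℤ)) * Ctx.Lq x w
  have hlift : Ctx.proj (∑ x ∈ hfin.toFinset, a x • Ctx.Tw x) = Ctx.c w := by
    rw [Ctx.c_eq w hw, finsum_mem_eq_finite_toFinset_sum _ hfin, map_sum]
    simp only [map_smul, a, Lq]
  have hlift' : Ctx.proj (∑ x ∈ hfin.toFinset, invert (a x) • Ctx.Tinv x⁻¹) = Ctx.c w := by
    rw [← Ctx.c_invariant w hw, ← hlift, map_sum, map_sum, map_sum]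
    simp only [map_smul, Ctx.iotaTL_smul, Ctx.iotaTL_t]
  have hsign := Ctx.sign_eq_of_proj_eq (hlift.trans hlift'.symm)
  simp only [map_sum, map_smul, sign_Tw, sign_Tinv, cs.length_inv, smul_eq_mul] at hsign
  rw [signedSum, finsum_mem_eq_finite_toFinset_sum _ hfin, map_sum]
  calc ∑ x ∈ hfin.toFinset, invert ((-1) ^ cs.length x * T (-(cs.length x : ℤ)) * Ctx.Lq x w)
      = ∑ x ∈ hfin.toFinset, invert (a x) * (-1) ^ cs.length x :=
        Finset.sum_congr rfl fun x _ => by simp only [a, map_mul, map_pow, map_neg, map_one]; ring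
    _ = ∑ x ∈ hfin.toFinset, a x * (-1) ^ cs.length x := hsign.symm
    _ = ∑ x ∈ hfin.toFinset, (-1) ^ cs.length x * T (-(cs.length x : ℤ)) * Ctx.Lq x w :=
        Finset.sum_congr rfl fun x _ => by simp only [a]; ring

theorem signedSum_eq_invert_toLaurent (w : W) :
    Ctx.signedSum w = invert (toLaurent (Ctx.signedLPoly w)) := by
  rw [signedSum, signedLPoly,
    finsum_mem_eq_finite_toFinset_sum _ (Ctx.finite_fullyCommutative_bruhatLE w),
    finsum_mem_eq_finite_toFinset_sum _ (Ctx.finite_fullyCommutative_bruhatLE w), map_sum, map_sum]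
  refine Finset.sum_congr rfl fun x _ => ?_
  rw [Lq, aeval_T_neg_one_eq_invert_toLaurent, map_mul, map_mul, map_pow, map_pow, map_neg,
    map_neg, toLaurent_X, invert_T, neg_pow (T (-1) : A), T_pow, mul_neg_one]

theorem coeff_zero_signedLPoly {w : W} (hw1 : w ≠ 1) : (Ctx.signedLPoly w).coeff 0 = 0 := by
  rw [signedLPoly, finsum_mem_eq_finite_toFinset_sum _ (Ctx.finite_fullyCommutative_bruhatLE w),
    finsetSum_coeff]
  refine Finset.sum_eq_zero fun x hx => ?_
  rw [Set.Finite.mem_toFinset] at hx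
  rw [coeff_zero_eq_eval_zero, eval_mul, eval_pow, eval_neg, eval_X, neg_zero,
    ← coeff_zero_eq_eval_zero]
  by_cases hxw : x = w
  · subst hxw
    rw [zero_pow (fun h => hw1 (cs.length_eq_zero_iff.mp h)), zero_mul]
  · rw [Ctx.L_coeff_zero x w ⟨hx.2, hxw⟩, mul_zero]

theorem signedSum_one : Ctx.signedSum 1 = 1 := by
  have hlower : {x | FullyCommutative cs x ∧ bruhatLE cs x (1 : W)} = {1} := by
    ext x
    constructor
    · exact fun hx => eq_one_of_bruhatLE_one hx.2
    · rintro rfl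
      exact ⟨fullyCommutative_one, Relation.ReflTransGen.refl⟩
  rw [signedSum, hlower, finsum_mem_singleton, cs.length_one, Lq, Ctx.L_self]
  simp

end TLContext

theorem statement3_general {B : Type*} {W : Type*} [Group W] {M : CoxeterMatrix B} {cs : CoxeterSystem M W}
    {H : Type*} [Ring H] [Algebra A H] {TL : Type*} [Ring TL] [Algebra A TL]
    (Ctx : TLContext cs H TL)
    (w : W) (hw : FullyCommutative cs w) :
    ∑ᶠ x ∈ {x | FullyCommutative cs x ∧ bruhatLE cs x w},
      ((-1 : A) ^ cs.length x * (LaurentPolynomial.T (-(cs.length x : ℤ)) : A) *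
        Ctx.Lq x w) =
      (if w = 1 then 1 else 0) := by
  change Ctx.signedSum w = _
  split_ifs with hw1
  · subst hw1
    exact Ctx.signedSum_one
  · have hbar := Ctx.invert_signedSum hw
    rw [Ctx.signedSum_eq_invert_toLaurent, involutive_invert] at hbar
    rw [Ctx.signedSum_eq_invert_toLaurent,
      Polynomial.eq_zero_of_toLaurent_eq_invert (Ctx.coeff_zero_signedLPoly hw1) hbar,
      map_zero, map_zero]

/-- Proposition (paper, Prop. `prop-l`): if `X` satisfies (★) and `w ∈ W_c`, then
`Σ_{x ∈ W_c, x ≤ w} (-1)^{ℓ(x)} q^{-ℓ(x)/2} L_{x,w}(q^{-1/2}) = δ_{e,w}`. -/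
theorem statement3 {B : Type*} {W : Type*} [Group W] {M : CoxeterMatrix B} {cs : CoxeterSystem M W}
    {H : Type*} [Ring H] [Algebra A H] {TL : Type*} [Ring TL] [Algebra A TL]
    (Ctx : TLContext cs H TL)
    (hstar : Ctx.Star) (w : W) (hw : FullyCommutative cs w) :
    ∑ᶠ x ∈ {x | FullyCommutative cs x ∧ bruhatLE cs x w},
      ((-1 : A) ^ cs.length x * (LaurentPolynomial.T (-(cs.length x : ℤ)) : A) *
        Ctx.Lq x w) =
      (if w = 1 then 1 else 0) :=
  statement3_general Ctx w hw

end TLPaper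
end
end

section
/- Let X be an arbitrary Coxeter graph, let w ∈ W_c(X), and let s ∈ S(X) be such that ws < w and ws ∈ W_c(X). Then for all x ∈ W_c(X) with x ≤ w, a_{x,w} = ã_{x,w} + Σ_{y ∈ W_c(X), ys ∉ W_c(X), ys > y} D_{x,ys} a_{y,ws}, where ã_{x,w} = a_{xs,ws} if x > xs; ã_{x,w} = q a_{xs,ws} + (1−q) a_{x,ws} if x < xs and xs ∈ W_c(X); and ã_{x,w} = (1−q) a_{x,ws} if x < xs and xs ∉ W_c(X). -/
/-!
Common setup: Coxeter systems, Bruhat order, fully commutative elements,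
the Hecke algebra `H(X)`, the generalized Temperley--Lieb algebra `TL(X)`,
and the polynomial families `R`, `P` (Kazhdan--Lusztig), `D`, `a`, `L`.
-/

open LaurentPolynomial Polynomial

noncomputable section

namespace TLPaper

variable {B : Type*} {W : Type*} [Group W] {M : CoxeterMatrix B} (cs : CoxeterSystem M W)

/-!
Since `ws < w`, `T_{w⁻¹} = T_s T_{(ws)⁻¹}`, hence `(t_{w⁻¹})⁻¹ = (t_{(ws)⁻¹})⁻¹ t_s⁻¹` with
`t_s⁻¹ = q⁻¹ (t_s + 1 - q)`. Expanding both inverses in the `a`-polynomials gives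
`Σ_x a_{x,w} t_x = Σ_y a_{y,ws} (t_y t_s + (1 - q) t_y)`. For `y ∈ W_c` the bracket is `q t_{ys}`
if `ys < y` (and then `ys ∈ W_c`, because cancelling a final letter preserves commutation
equivalence), and `t_{ys} + (1 - q) t_y` if `ys > y`, where `t_{ys} = Σ_x D_{x,ys} t_x` when
`ys ∉ W_c`. Comparing coefficients of the linearly independent `t_x` gives the recursion.
-/

section CommutationClasses

variable {B : Type*} {M : CoxeterMatrix B}

theorem reflTransGen_commMove_cons (c : B) {l₁ l₂ : List B}
    (h : Relation.ReflTransGen (CommMove M) l₁ l₂) :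
    Relation.ReflTransGen (CommMove M) (c :: l₁) (c :: l₂) :=
  h.lift (c :: ·) fun _ _ ⟨a, b, i, i', hM, h₁, h₂⟩ =>
    ⟨c :: a, b, i, i', hM, by simp [h₁], by simp [h₂]⟩

theorem reflTransGen_commMove_symm {l₁ l₂ : List B}
    (h : Relation.ReflTransGen (CommMove M) l₁ l₂) :
    Relation.ReflTransGen (CommMove M) l₂ l₁ := by
  induction h with
  | refl => exact .refl
  | tail _ hmove ih =>
    obtain ⟨a, b, i, i', hM, rfl, rfl⟩ := hmove
    exact ih.head ⟨a, b, i', i, (M.symmetric i' i).trans hM, rfl, rfl⟩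

theorem reflTransGen_commMove_move_front {c : B} {d : List B} (hd : ∀ x ∈ d, M c x = 2)
    (e : List B) : Relation.ReflTransGen (CommMove M) (d ++ c :: e) (c :: (d ++ e)) := by
  induction d with
  | nil => exact .refl
  | cons x d ih =>
    refine (reflTransGen_commMove_cons x (ih fun z hz => hd z (.tail x hz))).tail ?_
    exact ⟨[], d ++ e, x, c, (M.symmetric x c).trans (hd x (.head d)), rfl, rfl⟩

variable [DecidableEq B]

def restrictPair (j k : B) (l : List B) : List B := l.filter fun c => c = j ∨ c = k

theorem CommMove.restrictPair_eq {j k : B} (hjk : j = k ∨ M j k ≠ 2) {l₁ l₂ : List B}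
    (h : CommMove M l₁ l₂) : restrictPair j k l₁ = restrictPair j k l₂ := by
  obtain ⟨a, b, i, i', hM, rfl, rfl⟩ := h
  have hii' : (i = j ∨ i = k) → (i' = j ∨ i' = k) → i = i' := by
    rintro (rfl | rfl) (rfl | rfl) <;> first
      | rfl
      | exact hjk.resolve_right (· hM)
      | exact (hjk.resolve_right (· ((M.symmetric _ _).trans hM))).symm
  by_cases hi : i = j ∨ i = k <;> by_cases hi' : i' = j ∨ i' = k
  · obtain rfl := hii' hi hi'
    rfl
  all_goals simp [restrictPair, List.filter_append, hi, hi']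

theorem restrictPair_eq_of_reflTransGen {j k : B} (hjk : j = k ∨ M j k ≠ 2) {l₁ l₂ : List B}
    (h : Relation.ReflTransGen (CommMove M) l₁ l₂) : restrictPair j k l₁ = restrictPair j k l₂ := by
  induction h with
  | refl => rfl
  | tail _ hmove ih => exact ih.trans (hmove.restrictPair_eq hjk)

-- The pairs `j = k` are allowed so that the restrictions also record the multiplicity of `j`.
theorem reflTransGen_commMove_of_restrictPair_eq :
    ∀ l₁ l₂ : List B, (∀ j k : B, (j = k ∨ M j k ≠ 2) → restrictPair j k l₁ = restrictPair j k l₂) →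
    Relation.ReflTransGen (CommMove M) l₁ l₂
  | [], [], _ => .refl
  | [], c :: l, h => by simpa [restrictPair] using h c c (.inl rfl)
  | c :: m, l₂, h => by
    have hc : c ∈ l₂ := by
      have hcc := h c c (.inl rfl)
      simp only [restrictPair, List.filter_cons, or_self, decide_true, if_true] at hcc
      exact List.mem_of_mem_filter (hcc ▸ List.mem_cons_self)
    obtain ⟨d, e, rfl, hcd⟩ := List.eq_append_cons_of_mem hc
    -- A letter `x` of `d` not commuting with `c` would make the restrictions to `{c, x}`
    -- start with different letters, as `c ∉ d`.
    have hcomm : ∀ x ∈ d, M c x = 2 := by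
      intro x hx
      by_contra hMcx
      have hpr := h c x (.inr hMcx)
      obtain ⟨z, zs, hz⟩ := List.exists_cons_of_ne_nil
        (List.ne_nil_of_mem (List.mem_filter.mpr ⟨hx, by simp⟩ : x ∈ restrictPair c x d))
      rw [restrictPair, restrictPair, List.filter_append, hz, List.filter_cons_of_pos (by simp),
        List.cons_append, List.cons.injEq] at hpr
      have hzd : z ∈ d := List.mem_of_mem_filter (hz ▸ List.mem_cons_self)
      exact hcd (hpr.1 ▸ hzd)
    have hfront := reflTransGen_commMove_move_front hcomm e
    refine .trans (reflTransGen_commMove_cons c (reflTransGen_commMove_of_restrictPair_eq m (d ++ e)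
      fun j k hjk => ?_)) (reflTransGen_commMove_symm hfront)
    have hjk' := (h j k hjk).trans (restrictPair_eq_of_reflTransGen hjk hfront)
    simp only [restrictPair, List.filter_cons] at hjk'
    split_ifs at hjk'
    · exact List.cons_injective hjk'
    · exact hjk'

theorem reflTransGen_commMove_append_singleton_cancel {a b : List B} {i : B}
    (h : Relation.ReflTransGen (CommMove M) (a ++ [i]) (b ++ [i])) :
    Relation.ReflTransGen (CommMove M) a b :=
  reflTransGen_commMove_of_restrictPair_eq a b fun _ _ hjk => by
    have := restrictPair_eq_of_reflTransGen hjk h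
    simp only [restrictPair, List.filter_append] at this
    exact List.append_cancel_right this

end CommutationClasses

theorem FullyCommutative.mul_simple {B : Type*} {W : Type*} [Group W] {M : CoxeterMatrix B}
    {cs : CoxeterSystem M W} {y : W} {i : B} (hy : FullyCommutative cs y)
    (hi : cs.length (y * cs.simple i) < cs.length y) : FullyCommutative cs (y * cs.simple i) := by
  classical
  have hlen : cs.length (y * cs.simple i) + 1 = cs.length y := cs.isRightDescent_iff.mp hi
  have extend : ∀ l : List B, cs.IsReduced l ∧ cs.wordProd l = y * cs.simple i →
      cs.IsReduced (l ++ [i]) ∧ cs.wordProd (l ++ [i]) = y := by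
    rintro l ⟨hred, hprod⟩
    have hprod' : cs.wordProd (l ++ [i]) = y := by
      rw [cs.wordProd_append, hprod, cs.wordProd_singleton, cs.simple_mul_simple_cancel_right]
    refine ⟨?_, hprod'⟩
    rw [CoxeterSystem.IsReduced, hprod', List.length_append, List.length_singleton, ← hlen,
      ← hprod, hred]
  exact fun l₁ l₂ h₁ h₂ =>
    reflTransGen_commMove_append_singleton_cancel (hy _ _ (extend l₁ h₁) (extend l₂ h₂))

theorem aeval_q_injective : Function.Injective (Polynomial.aeval (R := ℤ) q) := by
  have hexpand : ∀ p : ℤ[X], Polynomial.aeval (R := ℤ) q p = toLaurent (expand ℤ 2 p) := fun p => by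
    rw [show q = T ((2 : ℕ) : ℤ) from rfl, ← Polynomial.toLaurent_X_pow,
      ← Polynomial.toLaurentAlg_apply, Polynomial.aeval_algHom_apply, Polynomial.toLaurentAlg_apply,
      ← Polynomial.expand_aeval, Polynomial.aeval_X_left_apply]
  intro p₁ p₂ h
  rw [hexpand, hexpand] at h
  exact expand_injective two_pos (Polynomial.toLaurent_injective h)

namespace TLContext

variable {B : Type*} {W : Type*} [Group W] {M : CoxeterMatrix B} {cs : CoxeterSystem M W}
  {H : Type*} [Ring H] [Algebra A H] {TL : Type*} [Ring TL] [Algebra A TL]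
  {Ctx : TLContext cs H TL}

theorem Tw_mul_Tw_of_length_mul {u v : W} (h : cs.length (u * v) = cs.length u + cs.length v) :
    Ctx.Tw u * Ctx.Tw v = Ctx.Tw (u * v) := by
  induction hn : cs.length v generalizing v with
  | zero => rw [cs.length_eq_zero_iff.mp hn, Ctx.Tw_one, mul_one, mul_one]
  | succ n ih =>
    obtain ⟨j, hj⟩ := cs.exists_rightDescent_of_ne_one (w := v) fun hv => by
      rw [hv, cs.length_one] at hn
      omega
    have hv : v * cs.simple j * cs.simple j = v := cs.simple_mul_simple_cancel_right j
    have hlen : cs.length (v * cs.simple j) + 1 = cs.length v := cs.isRightDescent_iff.mp hj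
    have huv : cs.length (u * (v * cs.simple j)) = cs.length u + cs.length (v * cs.simple j) := by
      have := cs.length_mul_le (u * (v * cs.simple j)) (cs.simple j)
      rw [mul_assoc, hv, cs.length_simple] at this
      exact le_antisymm (cs.length_mul_le _ _) (by omega)
    calc Ctx.Tw u * Ctx.Tw v
        = Ctx.Tw u * (Ctx.Tw (v * cs.simple j) * Ctx.Tw (cs.simple j)) := by
          rw [Ctx.Tw_mul_simple_of_lt _ j (by rw [hv]; omega), hv]
      _ = Ctx.Tw (u * (v * cs.simple j)) * Ctx.Tw (cs.simple j) := by
          rw [← mul_assoc, ih huv (by omega)]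
      _ = Ctx.Tw (u * v) := by
          rw [Ctx.Tw_mul_simple_of_lt _ j (by rw [mul_assoc, hv]; omega), mul_assoc, hv]

theorem Tinv_simple (i : B) :
    Ctx.Tinv (cs.simple i) = (T (-2) : A) • (Ctx.Tw (cs.simple i) + (1 - q) • 1) := by
  have hsq : Ctx.Tw (cs.simple i) * Ctx.Tw (cs.simple i) =
      q • 1 + (q - 1) • Ctx.Tw (cs.simple i) := by
    have := Ctx.Tw_mul_simple_of_gt (cs.simple i) i (by simp)
    rwa [cs.simple_mul_simple_self, Ctx.Tw_one] at this
  have hTq : (T (-2) : A) * q = 1 := by rw [q, ← T_add]; rfl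
  refine left_inv_eq_right_inv (Ctx.Tinv_mul_Tw _) ?_
  rw [mul_smul_comm, mul_add, mul_smul_comm, mul_one, hsq, add_assoc, ← add_smul,
    sub_add_sub_cancel', sub_self, zero_smul, add_zero, smul_smul, hTq, one_smul]

theorem Tinv_inv_eq_mul {w : W} {i : B} (hws : cs.length (w * cs.simple i) < cs.length w) :
    Ctx.Tinv w⁻¹ = Ctx.Tinv (w * cs.simple i)⁻¹ * Ctx.Tinv (cs.simple i) := by
  have hw : cs.simple i * (w * cs.simple i)⁻¹ = w⁻¹ := by
    rw [mul_inv_rev, cs.inv_simple, ← mul_assoc, cs.simple_mul_simple_self, one_mul]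
  have hlen : cs.length (cs.simple i * (w * cs.simple i)⁻¹) =
      cs.length (cs.simple i) + cs.length (w * cs.simple i)⁻¹ := by
    rw [hw, cs.length_inv, cs.length_inv, cs.length_simple, ← cs.isRightDescent_iff.mp hws,
      add_comm]
  have hTw : Ctx.Tw (cs.simple i) * Ctx.Tw (w * cs.simple i)⁻¹ = Ctx.Tw w⁻¹ := by
    rw [Ctx.Tw_mul_Tw_of_length_mul hlen, hw]
  refine left_inv_eq_right_inv (Ctx.Tinv_mul_Tw _) ?_
  rw [← hTw, mul_assoc, ← mul_assoc (Ctx.Tw (w * cs.simple i)⁻¹), Ctx.Tw_mul_Tinv, one_mul,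
    Ctx.Tw_mul_Tinv]

variable (Ctx) in
def t (w : W) : TL := Ctx.proj (Ctx.Tw w)

variable (Ctx) in
def fcBelow (w : W) : Finset W :=
  (show {x | FullyCommutative cs x ∧ bruhatLE cs x w}.Finite from
    (Ctx.finite_bruhatLE w).subset fun _ hx => hx.2).toFinset

variable (Ctx) in
theorem finsum_mem_eq_sum_fcBelow {N : Type*} [AddCommMonoid N] (f : W → N) (w : W) :
    ∑ᶠ x ∈ {x | FullyCommutative cs x ∧ bruhatLE cs x w}, f x = ∑ x ∈ Ctx.fcBelow w, f x :=
  finsum_mem_eq_finite_toFinset_sum _ _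

theorem mem_fcBelow {x w : W} :
    x ∈ Ctx.fcBelow w ↔ FullyCommutative cs x ∧ bruhatLE cs x w :=
  Set.Finite.mem_toFinset _

theorem self_mem_fcBelow {w : W} (hw : FullyCommutative cs w) : w ∈ Ctx.fcBelow w :=
  mem_fcBelow.mpr ⟨hw, .refl⟩

theorem apol_eq_zero_of_notMem_fcBelow {y w : W} (h : y ∉ Ctx.fcBelow w) : Ctx.apol y w = 0 :=
  Ctx.apol_eq_zero y w fun ⟨hy, _, hyw⟩ => h (mem_fcBelow.mpr ⟨hy, hyw⟩)

theorem D_eq_zero_of_notMem_fcBelow {x w : W} (h : x ∉ Ctx.fcBelow w) : Ctx.D x w = 0 :=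
  Ctx.D_eq_zero x w fun hx => h (mem_fcBelow.mpr hx)

theorem t_eq_sum_D (w : W) {S : Finset W} (hS : Ctx.fcBelow w ⊆ S) :
    Ctx.t w = ∑ x ∈ S, aeval q (Ctx.D x w) • Ctx.t x := by
  rw [t, Ctx.D_eq w, Ctx.finsum_mem_eq_sum_fcBelow]
  exact Finset.sum_subset hS fun x _ hx => by
    rw [D_eq_zero_of_notMem_fcBelow hx, map_zero, zero_smul]

theorem proj_Tinv_inv {w : W} (hw : FullyCommutative cs w) :
    Ctx.proj (Ctx.Tinv w⁻¹) =
      (T (-2 * (cs.length w : ℤ)) : A) • ∑ y ∈ Ctx.fcBelow w, aeval q (Ctx.apol y w) • Ctx.t y := by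
  rw [Ctx.apol_eq w hw, Ctx.finsum_mem_eq_sum_fcBelow]
  rfl

theorem eq_of_sum_aeval_smul_t_eq {S : Finset W} (hS : ∀ x ∈ S, FullyCommutative cs x)
    {f g : W → ℤ[X]} (h : ∑ x ∈ S, aeval q (f x) • Ctx.t x = ∑ x ∈ S, aeval q (g x) • Ctx.t x)
    {x : W} (hx : x ∈ S) : f x = g x := by
  have hindep : LinearIndependent A fun x : S => Ctx.t x.1 :=
    Ctx.t_indep.comp (fun x : S => ⟨x.1, hS x.1 x.2⟩) fun _ _ hxy =>
      Subtype.ext (Subtype.mk.inj hxy)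
  refine aeval_q_injective (sub_eq_zero.mp (Fintype.linearIndependent_iff.mp hindep
    (fun x => aeval q (f x) - aeval q (g x)) ?_ ⟨x, hx⟩))
  rw [Finset.sum_coe_sort S fun x => (aeval q (f x) - aeval q (g x)) • Ctx.t x]
  simp only [sub_smul, Finset.sum_sub_distrib, h, sub_self]

open scoped Classical in
theorem D_eq_ite {z : W} (hz : FullyCommutative cs z) (x : W) :
    Ctx.D x z = if x = z then 1 else 0 := by
  by_cases hx : x ∈ Ctx.fcBelow z
  · refine Ctx.eq_of_sum_aeval_smul_t_eq (f := (Ctx.D · z)) (g := fun y => if y = z then 1 else 0)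
      (fun y hy => (mem_fcBelow.mp hy).1) ?_ hx
    rw [← Ctx.t_eq_sum_D z subset_rfl]
    simp [ite_smul, self_mem_fcBelow hz]
  · rw [D_eq_zero_of_notMem_fcBelow hx, if_neg (ne_of_mem_of_not_mem (self_mem_fcBelow hz) hx).symm]

variable (Ctx) in
def rightMulCoeff (i : B) (y x : W) : ℤ[X] :=
  if cs.length (y * cs.simple i) < cs.length y then X * Ctx.D x (y * cs.simple i)
  else Ctx.D x (y * cs.simple i) + (1 - X) * Ctx.D x y

theorem t_mul_t_simple_add (y : W) (i : B) :
    Ctx.t y * Ctx.t (cs.simple i) + (1 - q) • Ctx.t y =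
      if cs.length (y * cs.simple i) < cs.length y then q • Ctx.t (y * cs.simple i)
      else Ctx.t (y * cs.simple i) + (1 - q) • Ctx.t y := by
  simp only [t, ← map_mul]
  split_ifs with h
  · rw [Ctx.Tw_mul_simple_of_gt y i h, map_add, map_smul, map_smul, add_assoc, ← add_smul,
      sub_add_sub_cancel', sub_self, zero_smul, add_zero]
  · rw [Ctx.Tw_mul_simple_of_lt y i
      ((lt_or_gt_of_ne (cs.length_mul_simple_ne y i)).resolve_left h)]

theorem t_mul_t_simple_add_eq_sum {y : W} (i : B) {S : Finset W} (hy : Ctx.fcBelow y ⊆ S)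
    (hys : Ctx.fcBelow (y * cs.simple i) ⊆ S) :
    Ctx.t y * Ctx.t (cs.simple i) + (1 - q) • Ctx.t y =
      ∑ x ∈ S, aeval q (Ctx.rightMulCoeff i y x) • Ctx.t x := by
  rw [t_mul_t_simple_add, Ctx.t_eq_sum_D _ hys, Ctx.t_eq_sum_D _ hy]
  simp only [rightMulCoeff]
  split_ifs <;> simp [Finset.smul_sum, smul_smul, add_smul, Finset.sum_add_distrib]

theorem sum_apol_smul_t_eq {w : W} {i : B} (hw : FullyCommutative cs w)
    (hws : cs.length (w * cs.simple i) < cs.length w)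
    (hwsc : FullyCommutative cs (w * cs.simple i)) :
    ∑ x ∈ Ctx.fcBelow w, aeval q (Ctx.apol x w) • Ctx.t x =
      ∑ y ∈ Ctx.fcBelow (w * cs.simple i), aeval q (Ctx.apol y (w * cs.simple i)) •
        (Ctx.t y * Ctx.t (cs.simple i) + (1 - q) • Ctx.t y) := by
  have hT : (T (-2 * (cs.length (w * cs.simple i) : ℤ)) : A) * T (-2) =
      T (-2 * (cs.length w : ℤ)) := by
    rw [← T_add, ← cs.isRightDescent_iff.mp hws]
    congr 1
    push_cast
    ring
  have h := congrArg Ctx.proj (Ctx.Tinv_inv_eq_mul hws)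
  rw [map_mul, proj_Tinv_inv hw, proj_Tinv_inv hwsc, Tinv_simple, map_smul, map_add, map_smul,
    map_one, smul_mul_smul_comm, hT, IsUnit.smul_left_cancel (isUnit_T _)] at h
  rw [h, Finset.sum_mul]
  refine Finset.sum_congr rfl fun y _ => ?_
  rw [smul_mul_assoc, mul_add, mul_smul_comm, mul_one]
  rfl

theorem apol_eq_sum_mul_rightMulCoeff {w : W} {i : B} (hw : FullyCommutative cs w)
    (hws : cs.length (w * cs.simple i) < cs.length w)
    (hwsc : FullyCommutative cs (w * cs.simple i)) {x : W} (hx : FullyCommutative cs x) :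
    Ctx.apol x w = ∑ y ∈ Ctx.fcBelow (w * cs.simple i),
      Ctx.apol y (w * cs.simple i) * Ctx.rightMulCoeff i y x := by
  classical
  set v := w * cs.simple i
  set S := insert x (Ctx.fcBelow w ∪
    (Ctx.fcBelow v).biUnion fun y => Ctx.fcBelow y ∪ Ctx.fcBelow (y * cs.simple i))
  have hS : ∀ z ∈ S, FullyCommutative cs z := by
    simp only [S, Finset.mem_insert, Finset.mem_union, Finset.mem_biUnion, mem_fcBelow]
    rintro z (rfl | ⟨hz, -⟩ | ⟨y, -, ⟨hz, -⟩ | ⟨hz, -⟩⟩) <;> assumption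
  have hwS : Ctx.fcBelow w ⊆ S := Finset.subset_union_left.trans (Finset.subset_insert _ _)
  have hyS : ∀ y ∈ Ctx.fcBelow v,
      Ctx.fcBelow y ⊆ S ∧ Ctx.fcBelow (y * cs.simple i) ⊆ S := fun y hy => by
    have : Ctx.fcBelow y ∪ Ctx.fcBelow (y * cs.simple i) ⊆ S :=
      (Finset.subset_biUnion_of_mem (fun y => Ctx.fcBelow y ∪ Ctx.fcBelow (y * cs.simple i))
        hy).trans (Finset.subset_union_right.trans (Finset.subset_insert x _))
    exact ⟨Finset.subset_union_left.trans this, Finset.subset_union_right.trans this⟩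
  refine Ctx.eq_of_sum_aeval_smul_t_eq (f := (Ctx.apol · w))
    (g := fun z => ∑ y ∈ Ctx.fcBelow v, Ctx.apol y v * Ctx.rightMulCoeff i y z) hS ?_
    (Finset.mem_insert_self x _)
  calc ∑ z ∈ S, aeval q (Ctx.apol z w) • Ctx.t z
      = ∑ z ∈ Ctx.fcBelow w, aeval q (Ctx.apol z w) • Ctx.t z :=
        (Finset.sum_subset hwS fun z _ hz => by
          rw [apol_eq_zero_of_notMem_fcBelow hz, map_zero, zero_smul]).symm
    _ = ∑ y ∈ Ctx.fcBelow v, aeval q (Ctx.apol y v) •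
          (Ctx.t y * Ctx.t (cs.simple i) + (1 - q) • Ctx.t y) := sum_apol_smul_t_eq hw hws hwsc
    _ = ∑ y ∈ Ctx.fcBelow v, aeval q (Ctx.apol y v) •
          ∑ z ∈ S, aeval q (Ctx.rightMulCoeff i y z) • Ctx.t z :=
        Finset.sum_congr rfl fun y hy => by
          rw [t_mul_t_simple_add_eq_sum i (hyS y hy).1 (hyS y hy).2]
    _ = ∑ z ∈ S, aeval q (∑ y ∈ Ctx.fcBelow v, Ctx.apol y v * Ctx.rightMulCoeff i y z) •
          Ctx.t z := by
        simp only [Finset.smul_sum, smul_smul, ← map_mul, map_sum, Finset.sum_smul]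
        exact Finset.sum_comm

open scoped Classical in
theorem rightMulCoeff_eq {x y : W} (i : B) (hx : FullyCommutative cs x)
    (hy : FullyCommutative cs y) :
    Ctx.rightMulCoeff i y x =
      (if y = x * cs.simple i then
        (if cs.length (x * cs.simple i) < cs.length x then 1 else X) else 0) +
      (if y = x then
        (if cs.length (x * cs.simple i) < cs.length x then 0 else 1 - X) else 0) +
      (if FullyCommutative cs y ∧ ¬ FullyCommutative cs (y * cs.simple i) ∧
          cs.length y < cs.length (y * cs.simple i) then Ctx.D x (y * cs.simple i) else 0) := by
  have hs : cs.simple i ≠ 1 := fun h => cs.length_mul_simple_ne x i (by rw [h, mul_one])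
  rcases eq_or_ne y (x * cs.simple i) with rfl | hyxs
  · rcases lt_or_gt_of_ne (cs.length_mul_simple_ne x i) with hlt | hlt <;>
      simp [rightMulCoeff, D_eq_ite hx, D_eq_ite hy, hs, hx, hlt, hlt.not_gt]
  have hysx : y * cs.simple i ≠ x := fun h => hyxs (by rw [← h, cs.simple_mul_simple_cancel_right])
  by_cases hysc : FullyCommutative cs (y * cs.simple i)
  · rcases eq_or_ne y x with rfl | hyx
    · simp [rightMulCoeff, D_eq_ite hysc, D_eq_ite hy, hs, hysc]
    · simp [rightMulCoeff, D_eq_ite hysc, D_eq_ite hy, hysc, hyx, hyxs, hysx.symm, Ne.symm hyx]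
  · have hlt : cs.length y < cs.length (y * cs.simple i) :=
      (lt_or_gt_of_ne (cs.length_mul_simple_ne y i)).resolve_left fun h => hysc (hy.mul_simple h)
    rcases eq_or_ne y x with rfl | hyx
    · simp [rightMulCoeff, D_eq_ite hy, hs, hysc, hy, hlt, hlt.not_gt, add_comm]
    · simp [rightMulCoeff, D_eq_ite hy, hysc, hy, hyx, hyxs, Ne.symm hyx, hlt, hlt.not_gt]

open scoped Classical in
theorem sum_fcBelow_apol_mul_ite_eq (v z : W) (p : ℤ[X]) :
    ∑ y ∈ Ctx.fcBelow v, Ctx.apol y v * (if y = z then p else 0) = Ctx.apol z v * p := by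
  simp only [mul_ite, mul_zero]
  rw [Finset.sum_ite_eq']
  split_ifs with hz
  · rfl
  · rw [apol_eq_zero_of_notMem_fcBelow hz, zero_mul]

open scoped Classical in
theorem finsum_mem_mul_apol (s : Set W) (g : W → ℤ[X]) (v : W) :
    ∑ᶠ y ∈ s, g y * Ctx.apol y v =
      ∑ y ∈ Ctx.fcBelow v, Ctx.apol y v * if y ∈ s then g y else 0 := by
  calc ∑ᶠ y ∈ s, g y * Ctx.apol y v = ∑ y ∈ Ctx.fcBelow v with y ∈ s, g y * Ctx.apol y v := by
        refine finsum_mem_eq_sum_of_inter_support_eq _ (Set.ext fun y => ?_)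
        simp only [Set.mem_inter_iff, Finset.coe_filter, Set.mem_ofPred_eq, Function.mem_support]
        refine ⟨fun ⟨hs, hne⟩ => ⟨⟨?_, hs⟩, hne⟩, fun ⟨⟨_, hs⟩, hne⟩ => ⟨hs, hne⟩⟩
        by_contra h
        exact hne (by rw [apol_eq_zero_of_notMem_fcBelow h, mul_zero])
    _ = _ := by
        rw [Finset.sum_filter]
        exact Finset.sum_congr rfl fun y _ => by rw [mul_ite, mul_zero, mul_comm]

theorem apol_eq_recursion {w : W} {i : B} (hw : FullyCommutative cs w)
    (hws : cs.length (w * cs.simple i) < cs.length w)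
    (hwsc : FullyCommutative cs (w * cs.simple i)) {x : W} (hx : FullyCommutative cs x) :
    Ctx.apol x w =
      (if cs.length (x * cs.simple i) < cs.length x then 1 else X) *
        Ctx.apol (x * cs.simple i) (w * cs.simple i) +
      (if cs.length (x * cs.simple i) < cs.length x then 0 else 1 - X) *
        Ctx.apol x (w * cs.simple i) +
      ∑ᶠ y ∈ {y | FullyCommutative cs y ∧ ¬ FullyCommutative cs (y * cs.simple i) ∧
          cs.length y < cs.length (y * cs.simple i)},
        Ctx.D x (y * cs.simple i) * Ctx.apol y (w * cs.simple i) := by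
  rw [apol_eq_sum_mul_rightMulCoeff hw hws hwsc hx, finsum_mem_mul_apol,
    Finset.sum_congr rfl fun y hy => by rw [rightMulCoeff_eq i hx (mem_fcBelow.mp hy).1]]
  simp only [mul_add, Finset.sum_add_distrib, sum_fcBelow_apol_mul_ite_eq, Set.mem_ofPred_eq]
  congr 1
  · ring
  -- the two sums differ only in their `Decidable` instances
  · exact Finset.sum_congr rfl fun _ _ => by congr

end TLContext

theorem statement6_general {B : Type*} {W : Type*} [Group W] {M : CoxeterMatrix B} {cs : CoxeterSystem M W}
    {H : Type*} [Ring H] [Algebra A H] {TL : Type*} [Ring TL] [Algebra A TL]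
    (Ctx : TLContext cs H TL)
    (w : W) (hw : FullyCommutative cs w) (i : B)
    (hws : cs.length (w * cs.simple i) < cs.length w)
    (hwsc : FullyCommutative cs (w * cs.simple i))
    (x : W) (hx : FullyCommutative cs x) :
    (cs.length (x * cs.simple i) < cs.length x →
      Ctx.apol x w = Ctx.apol (x * cs.simple i) (w * cs.simple i) +
        ∑ᶠ y ∈ {y | FullyCommutative cs y ∧ ¬ FullyCommutative cs (y * cs.simple i) ∧
            cs.length y < cs.length (y * cs.simple i)},
          Ctx.D x (y * cs.simple i) * Ctx.apol y (w * cs.simple i)) ∧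
    (cs.length x < cs.length (x * cs.simple i) →
      FullyCommutative cs (x * cs.simple i) →
      Ctx.apol x w = Polynomial.X * Ctx.apol (x * cs.simple i) (w * cs.simple i) +
        (1 - Polynomial.X) * Ctx.apol x (w * cs.simple i) +
        ∑ᶠ y ∈ {y | FullyCommutative cs y ∧ ¬ FullyCommutative cs (y * cs.simple i) ∧
            cs.length y < cs.length (y * cs.simple i)},
          Ctx.D x (y * cs.simple i) * Ctx.apol y (w * cs.simple i)) ∧
    (cs.length x < cs.length (x * cs.simple i) →
      ¬ FullyCommutative cs (x * cs.simple i) →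
      Ctx.apol x w = (1 - Polynomial.X) * Ctx.apol x (w * cs.simple i) +
        ∑ᶠ y ∈ {y | FullyCommutative cs y ∧ ¬ FullyCommutative cs (y * cs.simple i) ∧
            cs.length y < cs.length (y * cs.simple i)},
          Ctx.D x (y * cs.simple i) * Ctx.apol y (w * cs.simple i)) := by
  have hrec := Ctx.apol_eq_recursion hw hws hwsc hx
  refine ⟨fun hdesc => ?_, fun hasc _ => ?_, fun hasc hxs => ?_⟩
  · rw [hrec, if_pos hdesc, if_pos hdesc]
    ring
  · rw [hrec, if_neg hasc.not_gt, if_neg hasc.not_gt]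
  · rw [hrec, if_neg hasc.not_gt, if_neg hasc.not_gt,
      Ctx.apol_eq_zero (x * cs.simple i) _ fun h => hxs h.1]
    ring

/-- Proposition (paper, Prop. `proarec`): recursion for the `a`-polynomials, for an
arbitrary Coxeter graph `X`: if `w ∈ W_c`, `s ∈ S`, `ws < w`, `ws ∈ W_c`, then for all
`x ∈ W_c` with `x ≤ w`,
`a_{x,w} = ã_{x,w} + Σ_{y ∈ W_c, ys ∉ W_c, ys > y} D_{x,ys} a_{y,ws}`, where
`ã_{x,w} = a_{xs,ws}` if `x > xs`; `= q a_{xs,ws} + (1-q) a_{x,ws}` if `x < xs ∈ W_c`;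
`= (1-q) a_{x,ws}` if `x < xs ∉ W_c`. -/
theorem statement6 {B : Type*} {W : Type*} [Group W] {M : CoxeterMatrix B} {cs : CoxeterSystem M W}
    {H : Type*} [Ring H] [Algebra A H] {TL : Type*} [Ring TL] [Algebra A TL]
    (Ctx : TLContext cs H TL)
    (w : W) (hw : FullyCommutative cs w) (i : B)
    (hws : cs.length (w * cs.simple i) < cs.length w)
    (hwsc : FullyCommutative cs (w * cs.simple i))
    (x : W) (hx : FullyCommutative cs x) (hxw : bruhatLE cs x w) :
    (cs.length (x * cs.simple i) < cs.length x →
      Ctx.apol x w = Ctx.apol (x * cs.simple i) (w * cs.simple i) +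
        ∑ᶠ y ∈ {y | FullyCommutative cs y ∧ ¬ FullyCommutative cs (y * cs.simple i) ∧
            cs.length y < cs.length (y * cs.simple i)},
          Ctx.D x (y * cs.simple i) * Ctx.apol y (w * cs.simple i)) ∧
    (cs.length x < cs.length (x * cs.simple i) →
      FullyCommutative cs (x * cs.simple i) →
      Ctx.apol x w = Polynomial.X * Ctx.apol (x * cs.simple i) (w * cs.simple i) +
        (1 - Polynomial.X) * Ctx.apol x (w * cs.simple i) +
        ∑ᶠ y ∈ {y | FullyCommutative cs y ∧ ¬ FullyCommutative cs (y * cs.simple i) ∧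
            cs.length y < cs.length (y * cs.simple i)},
          Ctx.D x (y * cs.simple i) * Ctx.apol y (w * cs.simple i)) ∧
    (cs.length x < cs.length (x * cs.simple i) →
      ¬ FullyCommutative cs (x * cs.simple i) →
      Ctx.apol x w = (1 - Polynomial.X) * Ctx.apol x (w * cs.simple i) +
        ∑ᶠ y ∈ {y | FullyCommutative cs y ∧ ¬ FullyCommutative cs (y * cs.simple i) ∧
            cs.length y < cs.length (y * cs.simple i)},
          Ctx.D x (y * cs.simple i) * Ctx.apol y (w * cs.simple i)) :=
  statement6_general Ctx w hw i hws hwsc x hx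

end TLPaper
end
end

section
/- Let X be a Coxeter graph satisfying condition (★) and let x, w ∈ W_c(X) with x ≤ w. Then a_{x,w}(q) = (−1)^{ℓ(x)} (−1)^{ℓ(w)} R_{x,w}(q) + Σ_{y ∉ W_c(X), x < y < w} (−1)^{ℓ(y)} (−1)^{ℓ(w)} R_{y,w}(q) D_{x,y}(q). -/
/-!
Common setup: Coxeter systems, Bruhat order, fully commutative elements,
the Hecke algebra `H(X)`, the generalized Temperley--Lieb algebra `TL(X)`,
and the polynomial families `R`, `P` (Kazhdan--Lusztig), `D`, `a`, `L`.
-/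

open LaurentPolynomial Polynomial

noncomputable section

namespace TLPaper

variable {B : Type*} {W : Type*} [Group W] {M : CoxeterMatrix B} (cs : CoxeterSystem M W)

/-!
Apply `σ` to the expansion of `T_{w⁻¹}⁻¹` by `R`-polynomials and rewrite each `t_y` in the
basis `{t_x : x ∈ W_c}` by means of the `D`-polynomials. Comparing with the expansion of
`(t_{w⁻¹})⁻¹` by `a`-polynomials, linear independence of the `t_x` gives
`a_{x,w} = Σ_{y ≤ w} ε_y ε_w R_{y,w} D_{x,y}`. Since `D_{x,y} = δ_{x,y}` for `y ∈ W_c`, only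
`y = x` and the elements `y ∉ W_c` with `x < y < w` contribute.
-/

theorem aeval_q_eq_toLaurent_expand (p : ℤ[X]) : aeval q p = toLaurent (expand ℤ 2 p) := by
  have h : (aeval q : ℤ[X] →ₐ[ℤ] A) = toLaurentAlg.comp (expand ℤ 2) := by
    ext
    simp [q]
  exact congr($h p)

theorem aeval_q_injective_s10 : Function.Injective (aeval q : ℤ[X] →ₐ[ℤ] A) := by
  intro p p' h
  simp only [aeval_q_eq_toLaurent_expand] at h
  exact expand_injective two_pos (toLaurent_injective h)

namespace TLContext

variable {B : Type*} {W : Type*} [Group W] {M : CoxeterMatrix B} {cs : CoxeterSystem M W}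
  {H : Type*} [Ring H] [Algebra A H] {TL : Type*} [Ring TL] [Algebra A TL]
  (Ctx : TLContext cs H TL)

def bruhatIic (w : W) : Finset W := (Ctx.finite_bruhatLE w).toFinset

def bruhatIicFC (w : W) : Finset W :=
  ((Ctx.finite_bruhatLE w).subset fun _ h => h.2 :
    {x | FullyCommutative cs x ∧ bruhatLE cs x w}.Finite).toFinset

variable {Ctx}

@[simp]
theorem mem_bruhatIic {x w : W} : x ∈ Ctx.bruhatIic w ↔ bruhatLE cs x w :=
  Set.Finite.mem_toFinset _

@[simp]
theorem mem_bruhatIicFC {x w : W} :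
    x ∈ Ctx.bruhatIicFC w ↔ FullyCommutative cs x ∧ bruhatLE cs x w :=
  Set.Finite.mem_toFinset _

variable (Ctx)

theorem finsum_mem_bruhatLE {N : Type*} [AddCommMonoid N] (f : W → N) (w : W) :
    ∑ᶠ x ∈ {x | bruhatLE cs x w}, f x = ∑ x ∈ Ctx.bruhatIic w, f x :=
  finsum_mem_eq_finite_toFinset_sum f _

theorem finsum_mem_fullyCommutative_bruhatLE {N : Type*} [AddCommMonoid N] (f : W → N)
    (w : W) : ∑ᶠ x ∈ {x | FullyCommutative cs x ∧ bruhatLE cs x w}, f x =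
      ∑ x ∈ Ctx.bruhatIicFC w, f x :=
  finsum_mem_eq_finite_toFinset_sum f _

theorem eq_of_sum_aeval_smul_proj_Tw_eq {s : Finset W} (hs : ∀ y ∈ s, FullyCommutative cs y)
    {f g : W → ℤ[X]}
    (h : ∑ y ∈ s, aeval q (f y) • Ctx.proj (Ctx.Tw y) =
      ∑ y ∈ s, aeval q (g y) • Ctx.proj (Ctx.Tw y))
    {y : W} (hy : y ∈ s) : f y = g y := by
  classical
  refine aeval_q_injective_s10 <| linearIndependent_iff'ₛ.mp Ctx.t_indep
    (s.subtype (FullyCommutative cs)) (fun z => aeval q (f z)) (fun z => aeval q (g z)) ?_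
    ⟨y, hs y hy⟩ (Finset.mem_subtype.mpr hy)
  rwa [Finset.sum_subtype_of_mem (fun z => aeval q (f z) • Ctx.proj (Ctx.Tw z)) hs,
    Finset.sum_subtype_of_mem (fun z => aeval q (g z) • Ctx.proj (Ctx.Tw z)) hs]

theorem proj_Tw_eq_sum_D {y w : W} (hyw : bruhatLE cs y w) :
    Ctx.proj (Ctx.Tw y) =
      ∑ x ∈ Ctx.bruhatIicFC w, aeval q (Ctx.D x y) • Ctx.proj (Ctx.Tw x) := by
  rw [Ctx.D_eq y, Ctx.finsum_mem_fullyCommutative_bruhatLE]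
  refine Finset.sum_subset (fun x hx => ?_) (fun x _ hx => ?_)
  · rw [mem_bruhatIicFC] at hx ⊢
    exact ⟨hx.1, hx.2.trans hyw⟩
  · rw [Ctx.D_eq_zero x y (mem_bruhatIicFC.not.mp hx), map_zero, zero_smul]

theorem D_eq_ite_of_fullyCommutative [DecidableEq W] {x y : W} (hy : FullyCommutative cs y) :
    Ctx.D x y = if x = y then 1 else 0 := by
  have hyy : y ∈ Ctx.bruhatIicFC y := mem_bruhatIicFC.mpr ⟨hy, .refl⟩
  by_cases hx : x ∈ Ctx.bruhatIicFC y
  · refine Ctx.eq_of_sum_aeval_smul_proj_Tw_eq (f := (Ctx.D · y))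
      (g := fun z => if z = y then 1 else 0)
      (fun z hz => (mem_bruhatIicFC.mp hz).1) ?_ hx
    rw [← Ctx.proj_Tw_eq_sum_D .refl]
    simp only [apply_ite, map_one, map_zero, ite_smul, one_smul, zero_smul,
      Finset.sum_ite_eq', if_pos hyy]
  · rw [Ctx.D_eq_zero x y (mem_bruhatIicFC.not.mp hx), if_neg]
    rintro rfl
    exact hx hyy

theorem proj_Tinv_inv_eq_sum_R_D (w : W) :
    Ctx.proj (Ctx.Tinv w⁻¹) = (T (-2 * (cs.length w : ℤ)) : A) •
      ∑ x ∈ Ctx.bruhatIicFC w, aeval q (∑ y ∈ Ctx.bruhatIic w,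
        (-1 : ℤ[X]) ^ cs.length y * (-1) ^ cs.length w * Ctx.R y w * Ctx.D x y) •
          Ctx.proj (Ctx.Tw x) := by
  rw [Ctx.Tinv_eq w, Ctx.finsum_mem_bruhatLE, map_smul, map_sum]
  have hproj : ∀ y ∈ Ctx.bruhatIic w, Ctx.proj
      (((-1 : A) ^ cs.length y * aeval q (Ctx.R y w)) • Ctx.Tw y) =
      ∑ x ∈ Ctx.bruhatIicFC w,
        ((-1 : A) ^ cs.length y * aeval q (Ctx.R y w) * aeval q (Ctx.D x y)) •
          Ctx.proj (Ctx.Tw x) := fun y hy => by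
    rw [map_smul, Ctx.proj_Tw_eq_sum_D (mem_bruhatIic.mp hy), Finset.smul_sum]
    simp only [smul_smul]
  rw [Finset.sum_congr rfl hproj, Finset.sum_comm, mul_comm, mul_smul, Finset.smul_sum]
  congr 1
  refine Finset.sum_congr rfl fun x _ => ?_
  rw [← Finset.sum_smul, smul_smul, Finset.mul_sum, map_sum]
  congr 1
  refine Finset.sum_congr rfl fun y _ => ?_
  simp only [map_mul, map_pow, map_neg, map_one]
  ring

theorem apol_eq_sum_R_D {x w : W} (hw : FullyCommutative cs w) (hx : x ∈ Ctx.bruhatIicFC w) :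
    Ctx.apol x w = ∑ y ∈ Ctx.bruhatIic w,
      (-1 : ℤ[X]) ^ cs.length y * (-1) ^ cs.length w * Ctx.R y w * Ctx.D x y := by
  refine Ctx.eq_of_sum_aeval_smul_proj_Tw_eq (f := (Ctx.apol · w))
    (g := fun x => ∑ y ∈ Ctx.bruhatIic w,
      (-1 : ℤ[X]) ^ cs.length y * (-1) ^ cs.length w * Ctx.R y w * Ctx.D x y)
    (fun z hz => (mem_bruhatIicFC.mp hz).1) ?_ hx
  rw [← (isUnit_T (R := ℤ) (-2 * (cs.length w : ℤ))).smul_left_cancel,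
    ← Ctx.proj_Tinv_inv_eq_sum_R_D, Ctx.apol_eq w hw, Ctx.finsum_mem_fullyCommutative_bruhatLE]

theorem sum_bruhatIic_mul_D {x w : W} (hx : FullyCommutative cs x)
    (hw : FullyCommutative cs w) (hxw : bruhatLE cs x w) (g : W → ℤ[X]) :
    ∑ y ∈ Ctx.bruhatIic w, g y * Ctx.D x y = g x +
      ∑ᶠ y ∈ {y | ¬ FullyCommutative cs y ∧ bruhatLT cs x y ∧ bruhatLT cs y w},
        g y * Ctx.D x y := by
  classical
  rw [← Finset.add_sum_erase _ _ (mem_bruhatIic.mpr hxw), Ctx.D_self x hx, mul_one]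
  congr 1
  refine (finsum_mem_eq_sum_of_inter_support_eq _ ?_).symm
  ext y
  simp only [Set.mem_inter_iff, Set.mem_ofPred_eq, Function.mem_support, Finset.coe_erase,
    Set.mem_sdiff, Finset.mem_coe, mem_bruhatIic, Set.mem_singleton_iff]
  refine and_congr_left fun hgD => ⟨fun ⟨_, hxy, hyw⟩ => ⟨hyw.1, hxy.2.symm⟩, ?_⟩
  rintro ⟨hyw, hyx⟩
  have hD : Ctx.D x y ≠ 0 := right_ne_zero_of_mul hgD
  have hy : ¬ FullyCommutative cs y := fun hy =>
    hD (by rw [Ctx.D_eq_ite_of_fullyCommutative hy, if_neg (Ne.symm hyx)])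
  have hxy : bruhatLE cs x y := by_contra fun h => hD (Ctx.D_eq_zero x y fun h' => h h'.2)
  exact ⟨hy, ⟨hxy, Ne.symm hyx⟩, hyw, fun h => hy (h ▸ hw)⟩

end TLContext

theorem statement10_general {B : Type*} {W : Type*} [Group W] {M : CoxeterMatrix B} {cs : CoxeterSystem M W}
    {H : Type*} [Ring H] [Algebra A H] {TL : Type*} [Ring TL] [Algebra A TL]
    (Ctx : TLContext cs H TL)
    (x w : W)
    (hx : FullyCommutative cs x) (hw : FullyCommutative cs w)
    (hxw : bruhatLE cs x w) :
    Ctx.apol x w =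
      (-1 : Polynomial ℤ) ^ cs.length x * (-1 : Polynomial ℤ) ^ cs.length w *
        Ctx.R x w +
      ∑ᶠ y ∈ {y | ¬ FullyCommutative cs y ∧ bruhatLT cs x y ∧ bruhatLT cs y w},
        (-1 : Polynomial ℤ) ^ cs.length y * (-1 : Polynomial ℤ) ^ cs.length w *
          Ctx.R y w * Ctx.D x y := by
  rw [Ctx.apol_eq_sum_R_D hw (TLContext.mem_bruhatIicFC.mpr ⟨hx, hxw⟩),
    Ctx.sum_bruhatIic_mul_D hx hw hxw]

/-- Proposition (paper, Prop. `c-apol`): if `X` satisfies (★) and `x, w ∈ W_c` with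
`x ≤ w`, then `a_{x,w}(q) = ε_x ε_w R_{x,w}(q) +
Σ_{y ∉ W_c, x < y < w} ε_y ε_w R_{y,w}(q) D_{x,y}(q)`. -/
theorem statement10 {B : Type*} {W : Type*} [Group W] {M : CoxeterMatrix B} {cs : CoxeterSystem M W}
    {H : Type*} [Ring H] [Algebra A H] {TL : Type*} [Ring TL] [Algebra A TL]
    (Ctx : TLContext cs H TL)
    (hstar : Ctx.Star) (x w : W)
    (hx : FullyCommutative cs x) (hw : FullyCommutative cs w)
    (hxw : bruhatLE cs x w) :
    Ctx.apol x w =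
      (-1 : Polynomial ℤ) ^ cs.length x * (-1 : Polynomial ℤ) ^ cs.length w *
        Ctx.R x w +
      ∑ᶠ y ∈ {y | ¬ FullyCommutative cs y ∧ bruhatLT cs x y ∧ bruhatLT cs y w},
        (-1 : Polynomial ℤ) ^ cs.length y * (-1 : Polynomial ℤ) ^ cs.length w *
          Ctx.R y w * Ctx.D x y :=
  statement10_general Ctx x w hx hw hxw

end TLPaper
end
end
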